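/- arXiv:2006.08569 — 6 statements merged into one kernel-verified Lean document; each statement's English description precedes it below -/
import Mathlib

section
/- For 1 < q < 2 and all real x and Δx with Δx > 0, the function ℓ'(x) = |x|^{q-1}·sgn(x) satisfies ℓ'(x + Δx) ≤ ℓ'(x) + 2^{2−q}·ℓ'(Δx), i.e., |x+Δx|^{q-1}·sgn(x+Δx) ≤ |x|^{q-1}·sgn(x) + 2^{2−q}·(Δx)^{q-1}. -/
private lemma aux_subadd {a b p : ℝ} (ha : 0 ≤ a) (hb : 0 ≤ b) (hp0 : 0 ≤ p)
    (hp1 : p ≤ 1) : (a + b) ^ p ≤ a ^ p + b ^ p := by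
  have h := NNReal.rpow_add_le_add_rpow a.toNNReal b.toNNReal hp0 hp1
  rw [← Real.toNNReal_add ha hb] at h
  have := NNReal.coe_le_coe.mpr h
  push_cast [NNReal.coe_rpow, Real.coe_toNNReal _ (add_nonneg ha hb),
    Real.coe_toNNReal _ ha, Real.coe_toNNReal _ hb] at this
  exact this

private lemma aux_conc {a b p : ℝ} (ha : 0 ≤ a) (hb : 0 ≤ b) (hp0 : 0 < p)
    (hp1 : p ≤ 1) : a ^ p + b ^ p ≤ 2 ^ (1 - p) * (a + b) ^ p := by
  have hinv : (1 : ℝ) ≤ 1 / p := by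
    rw [le_div_iff₀ hp0]; simpa using hp1
  have h := NNReal.rpow_add_le_mul_rpow_add_rpow (a.toNNReal ^ p) (b.toNNReal ^ p) hinv
  rw [← NNReal.rpow_mul, ← NNReal.rpow_mul, mul_one_div, div_self hp0.ne',
    NNReal.rpow_one, NNReal.rpow_one] at h
  have h2 := NNReal.rpow_le_rpow h hp0.le
  rw [← NNReal.rpow_mul, one_div, inv_mul_cancel₀ hp0.ne', NNReal.rpow_one,
    NNReal.mul_rpow, ← NNReal.rpow_mul, sub_mul, inv_mul_cancel₀ hp0.ne',
    one_mul] at h2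
  have := NNReal.coe_le_coe.mpr h2
  push_cast [NNReal.coe_rpow, Real.coe_toNNReal _ ha, Real.coe_toNNReal _ hb] at this
  exact this

/-- For `1 < q < 2` and all real `x`, `Δx > 0`,
`ℓ'(x+Δx) ≤ ℓ'(x) + 2^{2−q} ℓ'(Δx)` where `ℓ'(t) = |t|^{q-1} sgn(t)`. -/
theorem stmt_2 (q x Δx : ℝ) (hq1 : 1 < q) (hq2 : q < 2) (hΔ : 0 < Δx) :
    |x + Δx| ^ (q - 1) * Real.sign (x + Δx)
      ≤ |x| ^ (q - 1) * Real.sign x + (2 : ℝ) ^ (2 - q) * Δx ^ (q - 1) := by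
  set p := q - 1 with hp
  have hp0 : 0 < p := by simp [hp]; linarith
  have hp1 : p ≤ 1 := by simp [hp]; linarith
  have h2q : 2 - q = 1 - p := by simp [hp]; ring
  have hone : (1 : ℝ) ≤ 2 ^ (1 - p) := by
    calc (1 : ℝ) = 2 ^ (0 : ℝ) := by simp
    _ ≤ 2 ^ (1 - p) := Real.rpow_le_rpow_of_exponent_le one_le_two (by linarith)
  have hΔp : 0 ≤ Δx ^ p := Real.rpow_nonneg hΔ.le p
  rw [h2q]
  rcases lt_trichotomy x 0 with hx | hx | hx
  · rcases lt_trichotomy (x + Δx) 0 with hs | hs | hs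
    · -- x + Δx < 0
      rw [Real.sign_of_neg hs, Real.sign_of_neg hx, abs_of_neg hs, abs_of_neg hx]
      have key : (-x) ^ p ≤ (-(x + Δx)) ^ p + Δx ^ p := by
        have hx' : -x = -(x + Δx) + Δx := by ring
        calc (-x) ^ p = (-(x + Δx) + Δx) ^ p := by rw [← hx']
        _ ≤ (-(x + Δx)) ^ p + Δx ^ p :=
            aux_subadd (by linarith) hΔ.le hp0.le hp1
      have : Δx ^ p ≤ 2 ^ (1 - p) * Δx ^ p := le_mul_of_one_le_left hΔp hone
      nlinarith
    · -- x + Δx = 0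
      rw [hs, Real.sign_zero, Real.sign_of_neg hx, abs_of_neg hx]
      have hxΔ : -x = Δx := by linarith
      have : Δx ^ p ≤ 2 ^ (1 - p) * Δx ^ p := le_mul_of_one_le_left hΔp hone
      rw [hxΔ]
      nlinarith
    · -- x + Δx > 0
      rw [Real.sign_of_pos hs, Real.sign_of_neg hx, abs_of_pos hs, abs_of_neg hx]
      have key : (x + Δx) ^ p + (-x) ^ p ≤ 2 ^ (1 - p) * Δx ^ p := by
        have : (x + Δx) + (-x) = Δx := by ring
        calc (x + Δx) ^ p + (-x) ^ p ≤ 2 ^ (1 - p) * ((x + Δx) + -x) ^ p :=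
            aux_conc hs.le (by linarith) hp0 hp1
        _ = 2 ^ (1 - p) * Δx ^ p := by rw [this]
      nlinarith
  · -- x = 0
    subst hx
    rw [Real.sign_zero, Real.sign_of_pos (by linarith : (0:ℝ) < 0 + Δx)]
    have : (0 + Δx) ^ p ≤ 2 ^ (1 - p) * Δx ^ p := by
      rw [zero_add]; exact le_mul_of_one_le_left hΔp hone
    simpa [abs_of_pos hΔ] using this
  · -- x > 0
    have hs : 0 < x + Δx := by linarith
    rw [Real.sign_of_pos hs, Real.sign_of_pos hx, abs_of_pos hs, abs_of_pos hx]
    have key : (x + Δx) ^ p ≤ x ^ p + Δx ^ p := aux_subadd hx.le hΔ.le hp0.le hp1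
    have : Δx ^ p ≤ 2 ^ (1 - p) * Δx ^ p := le_mul_of_one_le_left hΔp hone
    nlinarith
end

section
/- During the nonlin-cut algorithm, every residual entry g_i = −(1/γ)∑_{j∼i} w(i,j)ℓ'(x_i − x_j) − d_i ℓ'(x_i − (e_S)_i) remains nonnegative and every solution coordinate satisfies 0 ≤ x_i ≤ 1. -/
/-- During the nonlin-cut algorithm, every residual entry
`g_i = −(1/γ)∑_{j} w(i,j) ℓ'(x_i − x_j) − d_i ℓ'(x_i − (e_S)_i)` remains
nonnegative, and every solution coordinate satisfies `0 ≤ x_i ≤ 1`. The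
algorithm starts at `x = 0` and each step either does nothing or performs a
nonlin-push at a node `i` with `g_i > κ d_i`, increasing `x_i` by `Δ > 0` so
that the new residual at `i` equals `ρκd_i`. -/
theorem stmt_10 {V : Type*} [Fintype V] [DecidableEq V]
    (w : V → V → ℝ) (hsym : ∀ i j, w i j = w j i) (hw : ∀ i j, 0 ≤ w i j)
    (d : V → ℝ) (hd : ∀ i, d i = ∑ j, w i j)
    (S : Finset V) (γ κ ρ : ℝ) (hγ : 0 < γ) (hκ : 0 < κ)
    (hρ0 : 0 < ρ) (hρ1 : ρ < 1)
    (ℓd : ℝ → ℝ) (hmono : StrictMono ℓd)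
    (hanti : ∀ t, ℓd (-t) = - ℓd t) (hzero : ℓd 0 = 0)
    (g : (V → ℝ) → V → ℝ)
    (hg : ∀ x i, g x i =
      -(1/γ) * ∑ j, w i j * ℓd (x i - x j)
      - d i * ℓd (x i - (if i ∈ S then (1:ℝ) else 0)))
    (x : ℕ → V → ℝ) (hx0 : x 0 = fun _ => 0)
    (hstep : ∀ n, x (n + 1) = x n ∨
      ∃ i Δ, 0 < Δ ∧ κ * d i < g (x n) i ∧
        x (n + 1) = Function.update (x n) i (x n i + Δ) ∧
        g (x (n + 1)) i = ρ * κ * d i) :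
    ∀ n i, 0 ≤ g (x n) i ∧ 0 ≤ x n i ∧ x n i ≤ 1 := by
  have hd0 : ∀ i, 0 ≤ d i := fun i => by
    rw [hd]; exact Finset.sum_nonneg fun j _ => hw i j
  have hℓpos : ∀ t : ℝ, 0 < t → 0 < ℓd t := fun t ht => hzero ▸ hmono ht
  intro n
  induction n with
  | zero =>
    intro i
    refine ⟨?_, by rw [hx0], by rw [hx0]; norm_num⟩
    rw [hg, hx0]
    simp only [sub_self, hzero, mul_zero, Finset.sum_const_zero, neg_zero, zero_sub, zero_mul]
    by_cases hi : i ∈ S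
    · simp only [hi, if_true, hanti]
      have := hℓpos 1 one_pos
      nlinarith [hd0 i]
    · simp [hi, hzero]
  | succ n ih =>
    rcases hstep n with heq | ⟨i, Δ, hΔ, hgi, hxn, hgnew⟩
    · intro j; rw [heq]; exact ih j
    · have hdi : 0 < d i := by
        rcases lt_or_eq_of_le (hd0 i) with h | h
        · exact h
        · exfalso
          have hwij : ∀ j : V, j ∈ Finset.univ → w i j = 0 := by
            rw [← Finset.sum_eq_zero_iff_of_nonneg (fun k _ => hw i k), ← hd, ← h]
          have hgz : g (x n) i = 0 := by
            rw [hg]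
            rw [Finset.sum_congr rfl fun k hk => by rw [hwij k hk, zero_mul]]
            simp [← h]
          rw [hgz, ← h, mul_zero] at hgi
          exact lt_irrefl 0 hgi
      have hxsucc : ∀ k, k ≠ i → x (n+1) k = x n k := by
        intro k hk; rw [hxn, Function.update_of_ne hk]
      have hxi : x (n+1) i = x n i + Δ := by rw [hxn, Function.update_self]
      have h1γ : (0:ℝ) < 1/γ := by positivity
      have hle1 : x (n+1) i ≤ 1 := by
        by_contra h
        push_neg at h
        have hsum : 0 ≤ ∑ k, w i k * ℓd (x (n+1) i - x (n+1) k) := by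
          apply Finset.sum_nonneg
          intro k _
          apply mul_nonneg (hw i k)
          by_cases hk : k = i
          · subst hk; simp [hzero]
          · rw [hxsucc k hk]
            have : x n k ≤ 1 := (ih k).2.2
            exact le_of_lt (hℓpos _ (by linarith))
        have hind : 0 < ℓd (x (n+1) i - (if i ∈ S then (1:ℝ) else 0)) := by
          apply hℓpos
          split <;> linarith
        have hG := hgnew
        rw [hg] at hG
        nlinarith [mul_pos hdi hind, mul_pos (mul_pos hρ0 hκ) hdi,
          mul_nonneg h1γ.le hsum]
      intro j
      by_cases hj : j = i
      · subst hj
        refine ⟨?_, ?_, hle1⟩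
        · rw [hgnew]
          exact le_of_lt (mul_pos (mul_pos hρ0 hκ) hdi)
        · rw [hxi]; linarith [(ih j).2.1]
      · refine ⟨?_, by rw [hxsucc j hj]; exact (ih j).2.1,
          by rw [hxsucc j hj]; exact (ih j).2.2⟩
        have hgold := (ih j).1
        rw [hg] at hgold ⊢
        rw [hxsucc j hj]
        have hsumle : ∑ k, w j k * ℓd (x n j - x (n+1) k) ≤
            ∑ k, w j k * ℓd (x n j - x n k) := by
          apply Finset.sum_le_sum
          intro k _
          apply mul_le_mul_of_nonneg_left _ (hw j k)
          apply hmono.monotone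
          have hxk : x n k ≤ x (n+1) k := by
            by_cases hk : k = i
            · subst hk; rw [hxi]; linarith
            · rw [hxsucc k hk]
          linarith
        nlinarith [mul_le_mul_of_nonneg_left hsumle h1γ.le]
end

section
/- Suppose the loss ℓ satisfies: ℓ' increasing, antisymmetric, ℓ'' > c, and ℓ'(x+Δx) ≤ ℓ'(x) + kℓ'(Δx) for Δx > 0 (condition 3a). Then after one nonlin-push step at node i (which increases x_i so that the new residual at i equals ρκd_i), the 1-norm of the residual decreases by at least c·d_i·(ℓ')^{-1}(γ(1−ρ)κ / (k(1+γ))). -/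
/-- Under condition 3(a) (`ℓ'` increasing, antisymmetric, `ℓ'' > c` on
`(−1,1)`, and `ℓ'(x+Δ) ≤ ℓ'(x) + k ℓ'(Δ)` for `Δ > 0`), one nonlin-push step
at node `i` (increasing `x_i` by `Δ > 0` so that the new residual at `i`
equals `ρκd_i`) decreases the 1-norm of the residual by strictly more than
`c d_i (ℓ')^{-1}(γ(1−ρ)κ/(k(1+γ)))`. -/
theorem stmt_12 {V : Type*} [Fintype V] [DecidableEq V]
    (w : V → V → ℝ) (hsym : ∀ i j, w i j = w j i) (hw : ∀ i j, 0 ≤ w i j)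
    (d : V → ℝ) (hd : ∀ i, d i = ∑ j, w i j)
    (S : Finset V) (γ κ ρ c k : ℝ) (hγ : 0 < γ) (hκ : 0 < κ)
    (hρ0 : 0 < ρ) (hρ1 : ρ < 1) (hc : 0 < c) (hk : 0 < k)
    (ℓd : ℝ → ℝ) (hmono : StrictMono ℓd)
    (hanti : ∀ t, ℓd (-t) = - ℓd t)
    (hsecond : ∀ t ∈ Set.Ioo (-1 : ℝ) 1, c < deriv ℓd t)
    (h3a : ∀ t Δ : ℝ, 0 < Δ → ℓd (t + Δ) ≤ ℓd t + k * ℓd Δ)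
    (g : (V → ℝ) → V → ℝ)
    (hg : ∀ x i, g x i =
      -(1/γ) * ∑ j, w i j * ℓd (x i - x j)
      - d i * ℓd (x i - (if i ∈ S then (1:ℝ) else 0)))
    (x : V → ℝ) (i : V) (Δ : ℝ) (x' : V → ℝ)
    (hx01 : ∀ j, 0 ≤ x j ∧ x j ≤ 1)
    (hgnn : ∀ j, 0 ≤ g x j) (hΔ : 0 < Δ)
    (hviol : κ * d i < g x i)
    (hx' : x' = Function.update x i (x i + Δ))
    (hpush : g x' i = ρ * κ * d i)
    (hg'nn : ∀ j, 0 ≤ g x' j) :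
    c * d i * Function.invFun ℓd (γ * (1 - ρ) * κ / (k * (1 + γ)))
      < (∑ j, |g x j|) - ∑ j, |g x' j| := by
  classical
  set e : V → ℝ := fun j => if j ∈ S then (1:ℝ) else 0 with he
  have hg' : ∀ y j, g y j = -(1/γ) * ∑ l, w j l * ℓd (y j - y l)
      - d j * ℓd (y j - e j) := fun y j => hg y j
  have hℓ0 : ℓd 0 = 0 := by
    have h := hanti 0
    simp at h
    linarith
  have hℓpos : ∀ t : ℝ, 0 < t → 0 < ℓd t := by
    intro t ht
    have := hmono ht
    rwa [hℓ0] at this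
  have hℓnonneg : ∀ t : ℝ, 0 ≤ t → 0 ≤ ℓd t := by
    intro t ht
    rcases eq_or_lt_of_le ht with h | h
    · rw [← h, hℓ0]
    · exact (hℓpos t h).le
  have hdnn : ∀ j, 0 ≤ d j := by
    intro j; rw [hd]; exact Finset.sum_nonneg fun l _ => hw j l
  -- d i > 0
  have hdpos : 0 < d i := by
    rcases eq_or_lt_of_le (hdnn i) with h | h
    · exfalso
      have hw0 : ∀ l : V, w i l = 0 := by
        have hs0 : ∑ l, w i l = 0 := by rw [← hd]; exact h.symm
        have := (Finset.sum_eq_zero_iff_of_nonneg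
          (fun l (_ : l ∈ Finset.univ) => hw i l)).mp hs0
        intro l; exact this l (Finset.mem_univ l)
      have : g x i = 0 := by
        rw [hg' x i, ← h]
        simp [hw0]
      rw [this, ← h] at hviol
      simp at hviol
    · exact h
  -- x' values
  have hx'i : x' i = x i + Δ := by rw [hx']; simp
  have hx'j : ∀ j, j ≠ i → x' j = x j := by
    intro j hj; rw [hx']; simp [Function.update_of_ne hj]
  -- differentiability on (-1,1)
  have hdiffAt : ∀ t ∈ Set.Ioo (-1 : ℝ) 1, DifferentiableAt ℝ ℓd t := by
    intro t ht
    by_contra h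
    have h2 := hsecond t ht
    rw [deriv_zero_of_not_differentiableAt h] at h2
    linarith
  -- MVT lower bound lemma
  have hmvt : ∀ u v : ℝ, u < v → -1 < u → v < 1 → c * (v - u) < ℓd v - ℓd u := by
    intro u v huv hu hv
    have hsub : Set.Icc u v ⊆ Set.Ioo (-1 : ℝ) 1 := fun t ht =>
      ⟨lt_of_lt_of_le hu ht.1, lt_of_le_of_lt ht.2 hv⟩
    have hcont : ContinuousOn ℓd (Set.Icc u v) := fun t ht =>
      (hdiffAt t (hsub ht)).continuousAt.continuousWithinAt
    have hdOn : DifferentiableOn ℝ ℓd (Set.Ioo u v) := fun t ht =>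
      (hdiffAt t (hsub (Set.Ioo_subset_Icc_self ht))).differentiableWithinAt
    obtain ⟨ξ, hξ, hslope⟩ := exists_deriv_eq_slope ℓd huv hcont hdOn
    have hξc : c < (ℓd v - ℓd u) / (v - u) := by
      rw [← hslope]
      exact hsecond ξ (hsub (Set.Ioo_subset_Icc_self hξ))
    have hvu : 0 < v - u := by linarith
    calc c * (v - u) < ((ℓd v - ℓd u) / (v - u)) * (v - u) := by
          exact mul_lt_mul_of_pos_right hξc hvu
      _ = ℓd v - ℓd u := by field_simp
  -- sum identity
  have hsumid : ∀ y : V → ℝ, ∑ j, g y j = -∑ j, d j * ℓd (y j - e j) := by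
    intro y
    have hzero : ∑ j : V, ∑ l : V, w j l * ℓd (y j - y l) = 0 := by
      have h1 : ∑ j : V, ∑ l : V, w j l * ℓd (y j - y l)
          = ∑ j : V, ∑ l : V, w l j * ℓd (y l - y j) := Finset.sum_comm
      have h2 : ∑ j : V, ∑ l : V, w l j * ℓd (y l - y j)
          = -∑ j : V, ∑ l : V, w j l * ℓd (y j - y l) := by
        rw [← Finset.sum_neg_distrib]
        apply Finset.sum_congr rfl
        intro j _
        rw [← Finset.sum_neg_distrib]
        apply Finset.sum_congr rfl
        intro l _
        rw [hsym l j]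
        have : ℓd (y l - y j) = - ℓd (y j - y l) := by
          rw [← hanti]; ring_nf
        rw [this]; ring
      linarith [h1.trans h2]
    calc ∑ j, g y j
        = ∑ j, (-(1/γ) * ∑ l, w j l * ℓd (y j - y l) - d j * ℓd (y j - e j)) := by
          apply Finset.sum_congr rfl; intro j _; exact hg' y j
      _ = -(1/γ) * (∑ j : V, ∑ l : V, w j l * ℓd (y j - y l))
            - ∑ j, d j * ℓd (y j - e j) := by
          rw [Finset.sum_sub_distrib, ← Finset.mul_sum]
      _ = -∑ j, d j * ℓd (y j - e j) := by rw [hzero]; ring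
  -- norm difference
  have hdiff1 : (∑ j, |g x j|) - ∑ j, |g x' j|
      = d i * (ℓd (x i + Δ - e i) - ℓd (x i - e i)) := by
    have ha1 : ∑ j, |g x j| = ∑ j, g x j :=
      Finset.sum_congr rfl fun j _ => abs_of_nonneg (hgnn j)
    have ha2 : ∑ j, |g x' j| = ∑ j, g x' j :=
      Finset.sum_congr rfl fun j _ => abs_of_nonneg (hg'nn j)
    rw [ha1, ha2, hsumid x, hsumid x']
    have : ∑ j, d j * ℓd (x' j - e j) - ∑ j, d j * ℓd (x j - e j)
        = ∑ j, (d j * ℓd (x' j - e j) - d j * ℓd (x j - e j)) := by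
      rw [Finset.sum_sub_distrib]
    have hsingle : ∑ j, (d j * ℓd (x' j - e j) - d j * ℓd (x j - e j))
        = d i * ℓd (x' i - e i) - d i * ℓd (x i - e i) := by
      apply Finset.sum_eq_single
      · intro j _ hj
        rw [hx'j j hj]; ring
      · intro h; exact absurd (Finset.mem_univ i) h
    rw [show -∑ j, d j * ℓd (x j - e j) - -∑ j, d j * ℓd (x' j - e j)
        = ∑ j, d j * ℓd (x' j - e j) - ∑ j, d j * ℓd (x j - e j) by ring,
      this, hsingle, hx'i]
    ring
  have hei01 : e i = 0 ∨ e i = 1 := by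
    simp only [he]; by_cases h : i ∈ S <;> simp [h]
  have hei0 : 0 ≤ e i := by rcases hei01 with h | h <;> rw [h] <;> norm_num
  have hei1 : e i ≤ 1 := by rcases hei01 with h | h <;> rw [h] <;> norm_num
  -- x i + Δ ≤ 1
  have hb1 : x i + Δ ≤ 1 := by
    by_contra h
    push_neg at h
    have hkey : g x' i < 0 := by
      rw [hg' x' i, hx'i]
      have hsumnn : 0 ≤ ∑ l, w i l * ℓd (x i + Δ - x' l) := by
        apply Finset.sum_nonneg
        intro l _
        apply mul_nonneg (hw i l)
        by_cases hl : l = i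
        · subst hl; rw [hx'i]
          simp [hℓ0]
        · rw [hx'j l hl]
          apply hℓnonneg
          have := (hx01 l).2
          linarith
      have hℓe : 0 < ℓd (x i + Δ - e i) := by
        apply hℓpos; linarith
      have h1 : -(1/γ) * ∑ l, w i l * ℓd (x i + Δ - x' l) ≤ 0 := by
        apply mul_nonpos_of_nonpos_of_nonneg _ hsumnn
        have : 0 < 1/γ := by positivity
        linarith
      nlinarith [mul_pos hdpos hℓe]
    rw [hpush] at hkey
    nlinarith [mul_pos (mul_pos hρ0 hκ) hdpos]
  have hΔ1 : Δ ≤ 1 := by have := (hx01 i).1; linarith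
  -- ℓd Δ lower bound
  set A : ℝ := γ * (1 - ρ) * κ / (k * (1 + γ)) with hA
  have hℓΔpos : 0 < ℓd Δ := hℓpos Δ hΔ
  have hAltℓΔ : A < ℓd Δ := by
    have hdecomp : g x i - g x' i
        = (1/γ) * ∑ l, (w i l * ℓd (x' i - x' l) - w i l * ℓd (x i - x l))
          + d i * (ℓd (x' i - e i) - ℓd (x i - e i)) := by
      rw [hg' x i, hg' x' i, Finset.sum_sub_distrib]
      ring
    have hterm : ∀ l : V, w i l * ℓd (x' i - x' l) - w i l * ℓd (x i - x l)
        ≤ w i l * (k * ℓd Δ) := by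
      intro l
      rw [← mul_sub]
      apply mul_le_mul_of_nonneg_left _ (hw i l)
      by_cases hl : l = i
      · subst hl
        rw [hx'i]
        simp [hℓ0]
        positivity
      · rw [hx'j l hl, hx'i]
        have := h3a (x i - x l) Δ hΔ
        have harg : x i + Δ - x l = (x i - x l) + Δ := by ring
        rw [harg]
        linarith
    have hsumle : ∑ l, (w i l * ℓd (x' i - x' l) - w i l * ℓd (x i - x l))
        ≤ d i * (k * ℓd Δ) := by
      calc ∑ l, (w i l * ℓd (x' i - x' l) - w i l * ℓd (x i - x l))
          ≤ ∑ l, w i l * (k * ℓd Δ) := Finset.sum_le_sum fun l _ => hterm l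
        _ = (∑ l, w i l) * (k * ℓd Δ) := by rw [← Finset.sum_mul]
        _ = d i * (k * ℓd Δ) := by rw [← hd]
    have heterm : ℓd (x' i - e i) - ℓd (x i - e i) ≤ k * ℓd Δ := by
      rw [hx'i]
      have := h3a (x i - e i) Δ hΔ
      have harg : x i + Δ - e i = (x i - e i) + Δ := by ring
      rw [harg]
      linarith
    have hub : g x i - g x' i ≤ (1/γ) * (d i * (k * ℓd Δ)) + d i * (k * ℓd Δ) := by
      rw [hdecomp]
      have h1 : (1/γ) * ∑ l, (w i l * ℓd (x' i - x' l) - w i l * ℓd (x i - x l))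
          ≤ (1/γ) * (d i * (k * ℓd Δ)) := by
        apply mul_le_mul_of_nonneg_left hsumle; positivity
      have h2 : d i * (ℓd (x' i - e i) - ℓd (x i - e i)) ≤ d i * (k * ℓd Δ) :=
        mul_le_mul_of_nonneg_left heterm hdpos.le
      linarith
    have hlb : (1 - ρ) * κ * d i < g x i - g x' i := by
      rw [hpush]; nlinarith
    have hkey : (1 - ρ) * κ * d i < d i * (k * ℓd Δ) * (1 + γ) / γ := by
      have : (1/γ) * (d i * (k * ℓd Δ)) + d i * (k * ℓd Δ)
          = d i * (k * ℓd Δ) * (1 + γ) / γ := by field_simp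
      linarith
    rw [hA, div_lt_iff₀ (by positivity)]
    have hkey2 : (1 - ρ) * κ * d i * γ < d i * (k * ℓd Δ) * (1 + γ) :=
      (lt_div_iff₀ hγ).mp hkey
    nlinarith [hkey2, hdpos]
  have hApos : 0 < A := by
    rw [hA]
    exact div_pos (mul_pos (mul_pos hγ (by linarith)) hκ) (mul_pos hk (by linarith))
  -- find ε > 0 small with ℓd ε < (ℓd Δ - A)/k and ε < Δ
  have hcont0 : ContinuousAt ℓd 0 :=
    (hdiffAt 0 (by norm_num : (0:ℝ) ∈ Set.Ioo (-1:ℝ) 1)).continuousAt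
  have htend : Filter.Tendsto ℓd (nhds 0) (nhds 0) := by
    have := hcont0.tendsto; rwa [hℓ0] at this
  have hgap : 0 < (ℓd Δ - A)/k := by
    apply div_pos _ hk; linarith
  have hev : ∀ᶠ t in nhdsWithin (0:ℝ) (Set.Ioi 0),
      ℓd t < (ℓd Δ - A)/k ∧ t < Δ ∧ 0 < t := by
    have h1 : ∀ᶠ t in nhds (0:ℝ), ℓd t < (ℓd Δ - A)/k :=
      htend (Iio_mem_nhds hgap)
    have h2 : ∀ᶠ t in nhds (0:ℝ), t < Δ := Iio_mem_nhds hΔ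
    have h3 : ∀ᶠ t in nhdsWithin (0:ℝ) (Set.Ioi 0), 0 < t :=
      eventually_mem_nhdsWithin
    filter_upwards [h1.filter_mono nhdsWithin_le_nhds,
      h2.filter_mono nhdsWithin_le_nhds, h3] with t ht1 ht2 ht3
    exact ⟨ht1, ht2, ht3⟩
  obtain ⟨ε, hε1, hε2, hε3⟩ := hev.exists
  -- Δ' := Δ - ε satisfies A < ℓd Δ'
  have hΔ'lt : A < ℓd (Δ - ε) := by
    have h4 := h3a (Δ - ε) ε hε3
    rw [sub_add_cancel] at h4
    have h5 : k * ℓd ε < ℓd Δ - A := by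
      have := (mul_lt_mul_of_pos_left hε1 hk)
      calc k * ℓd ε < k * ((ℓd Δ - A)/k) := this
        _ = ℓd Δ - A := by field_simp
    linarith
  have hΔ'pos : 0 < Δ - ε := by
    by_contra h
    push_neg at h
    have : ℓd (Δ - ε) ≤ ℓd 0 := hmono.monotone h
    rw [hℓ0] at this
    linarith
  have hΔ'lt1 : Δ - ε < 1 := by linarith
  -- IVT: find t0 with ℓd t0 = A, 0 < t0 ≤ Δ - ε
  have hcontIcc : ContinuousOn ℓd (Set.Icc 0 (Δ - ε)) := by
    intro t ht
    exact (hdiffAt t ⟨by linarith [ht.1], by linarith [ht.2]⟩).continuousAt.continuousWithinAt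
  have hivt := intermediate_value_Icc hΔ'pos.le hcontIcc
  have hAmem : A ∈ Set.Icc (ℓd 0) (ℓd (Δ - ε)) := by
    rw [hℓ0]; exact ⟨hApos.le, hΔ'lt.le⟩
  obtain ⟨t0, ht0mem, ht0⟩ := hivt hAmem
  have ht0pos : 0 < t0 := by
    by_contra h
    push_neg at h
    have : ℓd t0 ≤ ℓd 0 := hmono.monotone h
    rw [hℓ0, ht0] at this
    linarith
  have ht0ltΔ : t0 < Δ := by
    have := ht0mem.2; linarith
  have hinv : Function.invFun ℓd A = t0 := by
    rw [← ht0]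
    exact Function.leftInverse_invFun hmono.injective t0
  -- final estimate
  rw [hinv, hdiff1]
  set a : ℝ := x i - e i with ha
  set b : ℝ := x i + Δ - e i with hb
  set ε2 : ℝ := (Δ - t0)/2 with hε2def
  have hε2pos : 0 < ε2 := by rw [hε2def]; linarith
  have hanb : a + ε2 < b - ε2 := by
    rw [ha, hb, hε2def]; linarith
  have hau : -1 < a + ε2 := by
    have := (hx01 i).1
    rw [ha]; linarith
  have hbv : b - ε2 < 1 := by
    rw [hb]; linarith
  have hmvt2 := hmvt (a + ε2) (b - ε2) hanb hau hbv
  have hgap2 : (b - ε2) - (a + ε2) = t0 := by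
    rw [ha, hb, hε2def]; ring
  rw [hgap2] at hmvt2
  have hmono1 : ℓd (b - ε2) ≤ ℓd b := hmono.monotone (by linarith)
  have hmono2 : ℓd a ≤ ℓd (a + ε2) := hmono.monotone (by linarith)
  have hfinal : c * t0 < ℓd b - ℓd a := by linarith
  calc c * d i * t0 = d i * (c * t0) := by ring
    _ < d i * (ℓd b - ℓd a) := by
        exact mul_lt_mul_of_pos_left hfinal hdpos
end

section
/- Suppose ℓ satisfies: ℓ' is c-Lipschitz, strictly increasing, antisymmetric, and ℓ'(x+Δx) ≥ ℓ'(x) + kℓ'(Δx) for x ≥ 0, Δx > 0 (condition 3b). Then after one nonlin-push at node i, the decrease of ‖g‖₁ is strictly larger than k·d_i·ℓ'(γ(1−ρ)κ / (c(1+γ))), and consequently if the algorithm stops after K iterations then ∑_{i=1}^K d_i ≤ vol(S) / (k·ℓ'(γ(1−ρ)κ/(c(1+γ)))). -/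
/-- Under condition 3(b) (`ℓ'` is `c`-Lipschitz, strictly increasing,
antisymmetric, and `ℓ'(x+Δ) ≥ ℓ'(x) + k ℓ'(Δ)` for `x ≥ 0, Δ > 0`): each
nonlin-push at node `i_t` decreases `‖g‖₁` by strictly more than
`k d_{i_t} ℓ'(γ(1−ρ)κ/(c(1+γ)))`, and consequently if the algorithm stops
after `K` iterations then
`∑_{t<K} d_{i_t} ≤ vol(S) / (k ℓ'(γ(1−ρ)κ/(c(1+γ))))`. -/
theorem stmt_14 {V : Type*} [Fintype V] [DecidableEq V]
    (w : V → V → ℝ) (hsym : ∀ i j, w i j = w j i) (hw : ∀ i j, 0 ≤ w i j)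
    (d : V → ℝ) (hd : ∀ i, d i = ∑ j, w i j)
    (S : Finset V) (γ κ ρ c k : ℝ) (hγ : 0 < γ) (hκ : 0 < κ)
    (hρ0 : 0 < ρ) (hρ1 : ρ < 1) (hc : 0 < c) (hk : 0 < k)
    (ℓd : ℝ → ℝ) (hmono : StrictMono ℓd)
    (hanti : ∀ t, ℓd (-t) = - ℓd t)
    (hLip : ∀ a b : ℝ, |ℓd a - ℓd b| ≤ c * |a - b|)
    (h3b : ∀ a Δ : ℝ, 0 ≤ a → 0 < Δ → ℓd a + k * ℓd Δ ≤ ℓd (a + Δ))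
    (g : (V → ℝ) → V → ℝ)
    (hg : ∀ x i, g x i =
      -(1/γ) * ∑ j, w i j * ℓd (x i - x j)
      - d i * ℓd (x i - (if i ∈ S then (1:ℝ) else 0)))
    (K : ℕ) (x : ℕ → V → ℝ) (i : ℕ → V) (Δ : ℕ → ℝ)
    (hgnn : ∀ t j, 0 ≤ g (x t) j)
    (hx01 : ∀ t j, 0 ≤ x t j ∧ x t j ≤ 1)
    (hinit : (∑ j, |g (x 0) j|) = ∑ j ∈ S, d j)
    (hstep : ∀ t < K, 0 < Δ t ∧ κ * d (i t) < g (x t) (i t) ∧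
      x (t + 1) = Function.update (x t) (i t) (x t (i t) + Δ t) ∧
      g (x (t + 1)) (i t) = ρ * κ * d (i t)) :
    (∀ t < K,
      k * d (i t) * ℓd (γ * (1 - ρ) * κ / (c * (1 + γ)))
        < (∑ j, |g (x t) j|) - ∑ j, |g (x (t + 1)) j|) ∧
    ∑ t ∈ Finset.range K, d (i t)
      ≤ (∑ j ∈ S, d j) / (k * ℓd (γ * (1 - ρ) * κ / (c * (1 + γ)))) := by
  set θ := γ * (1 - ρ) * κ / (c * (1 + γ)) with hθdef
  have hθpos : 0 < θ := by
    apply div_pos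
    · have h1 : 0 < 1 - ρ := by linarith
      positivity
    · positivity
  have hℓ0 : ℓd 0 = 0 := by
    have h := hanti 0
    simp at h
    linarith
  have hℓθ : 0 < ℓd θ := by
    have h := hmono hθpos
    rwa [hℓ0] at h
  have hdnn : ∀ j, 0 ≤ d j := by
    intro j; rw [hd j]; exact Finset.sum_nonneg fun _ _ => hw j _
  -- the ℓ₁ norm of g equals the (negated) sum of the seed-terms
  have hsumg : ∀ y : V → ℝ,
      (∑ j, g y j) = - ∑ j, d j * ℓd (y j - (if j ∈ S then (1:ℝ) else 0)) := by
    intro y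
    have hzero : (∑ a, ∑ b, w a b * ℓd (y a - y b)) = 0 := by
      have h1 : (∑ a, ∑ b, w a b * ℓd (y a - y b))
          = ∑ b, ∑ a, w a b * ℓd (y a - y b) := Finset.sum_comm
      have h2 : (∑ b, ∑ a, w a b * ℓd (y a - y b))
          = - ∑ b, ∑ a, w b a * ℓd (y b - y a) := by
        rw [← Finset.sum_neg_distrib]
        refine Finset.sum_congr rfl fun b _ => ?_
        rw [← Finset.sum_neg_distrib]
        refine Finset.sum_congr rfl fun a _ => ?_
        rw [hsym a b, show y a - y b = -(y b - y a) by ring, hanti]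
        ring
      have h3 : (∑ b, ∑ a, w b a * ℓd (y b - y a))
          = ∑ a, ∑ b, w a b * ℓd (y a - y b) := rfl
      rw [h3] at h2
      linarith [h1.trans h2]
    simp only [hg]
    rw [Finset.sum_sub_distrib, ← Finset.mul_sum, hzero]
    ring
  have hF : ∀ t, (∑ j, |g (x t) j|) = ∑ j, g (x t) j :=
    fun t => Finset.sum_congr rfl fun j _ => abs_of_nonneg (hgnn t j)
  have main : ∀ t < K,
      k * d (i t) * ℓd θ < (∑ j, |g (x t) j|) - ∑ j, |g (x (t + 1)) j| := by
    intro t ht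
    obtain ⟨hΔpos, hgbig, hxupd, hgnew⟩ := hstep t ht
    set it := i t with hit
    -- positivity of the degree of the pushed node
    have hdpos : 0 < d it := by
      rcases (hdnn it).lt_or_eq with h | h
      · exact h
      · exfalso
        have hw0 : ∀ j, w it j = 0 := by
          intro j
          exact (Finset.sum_eq_zero_iff_of_nonneg (fun j _ => hw it j)).mp
            (by rw [← hd it, ← h]) j (Finset.mem_univ j)
        have hg0 : g (x t) it = 0 := by
          rw [hg]
          simp [hw0, ← h]
        rw [hg0, ← h, mul_zero] at hgbig
        exact lt_irrefl 0 hgbig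
    have hx'i : x (t+1) it = x t it + Δ t := by
      rw [hxupd]; simp
    have hx'j : ∀ j, j ≠ it → x (t+1) j = x t j := by
      intro j hj
      rw [hxupd]
      exact Function.update_of_ne hj _ _
    -- Lipschitz bounds on individual terms
    have hterm : ∀ j, ℓd (x (t+1) it - x (t+1) j) - ℓd (x t it - x t j) ≤ c * Δ t := by
      intro j
      have h1 := hLip (x (t+1) it - x (t+1) j) (x t it - x t j)
      have h2 : |(x (t+1) it - x (t+1) j) - (x t it - x t j)| ≤ Δ t := by
        by_cases hj : j = it
        · subst hj
          simpa using hΔpos.le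
        · rw [hx'i, hx'j j hj]
          have he : (x t it + Δ t - x t j) - (x t it - x t j) = Δ t := by ring
          rw [he, abs_of_nonneg hΔpos.le]
      calc ℓd (x (t+1) it - x (t+1) j) - ℓd (x t it - x t j)
          ≤ |ℓd (x (t+1) it - x (t+1) j) - ℓd (x t it - x t j)| := le_abs_self _
        _ ≤ c * |(x (t+1) it - x (t+1) j) - (x t it - x t j)| := h1
        _ ≤ c * Δ t := mul_le_mul_of_nonneg_left h2 hc.le
    have htermL : ℓd (x (t+1) it - (if it ∈ S then (1:ℝ) else 0))
        - ℓd (x t it - (if it ∈ S then (1:ℝ) else 0)) ≤ c * Δ t := by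
      have h1 := hLip (x (t+1) it - (if it ∈ S then (1:ℝ) else 0))
        (x t it - (if it ∈ S then (1:ℝ) else 0))
      have h2 : |(x (t+1) it - (if it ∈ S then (1:ℝ) else 0))
          - (x t it - (if it ∈ S then (1:ℝ) else 0))| ≤ Δ t := by
        rw [hx'i]
        have he : (x t it + Δ t - (if it ∈ S then (1:ℝ) else 0))
            - (x t it - (if it ∈ S then (1:ℝ) else 0)) = Δ t := by ring
        rw [he, abs_of_nonneg hΔpos.le]
      calc ℓd (x (t+1) it - (if it ∈ S then (1:ℝ) else 0))
            - ℓd (x t it - (if it ∈ S then (1:ℝ) else 0))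
          ≤ |ℓd (x (t+1) it - (if it ∈ S then (1:ℝ) else 0))
            - ℓd (x t it - (if it ∈ S then (1:ℝ) else 0))| := le_abs_self _
        _ ≤ c * |(x (t+1) it - (if it ∈ S then (1:ℝ) else 0))
            - (x t it - (if it ∈ S then (1:ℝ) else 0))| := h1
        _ ≤ c * Δ t := mul_le_mul_of_nonneg_left h2 hc.le
    have hsumb : (∑ j, w it j * ℓd (x (t+1) it - x (t+1) j))
        - (∑ j, w it j * ℓd (x t it - x t j)) ≤ d it * (c * Δ t) := by
      rw [← Finset.sum_sub_distrib]
      calc (∑ j, (w it j * ℓd (x (t+1) it - x (t+1) j) - w it j * ℓd (x t it - x t j)))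
          ≤ ∑ j, w it j * (c * Δ t) := by
            refine Finset.sum_le_sum fun j _ => ?_
            have h := mul_le_mul_of_nonneg_left (hterm j) (hw it j)
            nlinarith [h]
        _ = d it * (c * Δ t) := by rw [← Finset.sum_mul, ← hd it]
    -- the (scaled) decrease of the residual at the pushed node
    have hγbound : γ * (g (x t) it - g (x (t+1)) it) ≤ c * Δ t * d it * (1 + γ) := by
      have e1 := hg (x t) it
      have e2 := hg (x (t+1)) it
      have hγne : γ ≠ 0 := ne_of_gt hγ
      have heq : γ * (g (x t) it - g (x (t+1)) it)
          = ((∑ j, w it j * ℓd (x (t+1) it - x (t+1) j))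
              - ∑ j, w it j * ℓd (x t it - x t j))
            + γ * (d it * (ℓd (x (t+1) it - (if it ∈ S then (1:ℝ) else 0))
              - ℓd (x t it - (if it ∈ S then (1:ℝ) else 0)))) := by
        rw [e1, e2]
        field_simp
        ring
      rw [heq]
      have h2 := mul_le_mul_of_nonneg_left htermL (mul_nonneg hγ.le (hdnn it))
      nlinarith [hsumb, h2]
    -- lower bound on the push size
    have hΔθ : θ < Δ t := by
      rw [hθdef, div_lt_iff₀ (by positivity)]
      have hinner : (1 - ρ) * κ * d it < g (x t) it - g (x (t+1)) it := by
        rw [hgnew]; nlinarith [hgbig]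
      have h1 := mul_lt_mul_of_pos_left hinner hγ
      nlinarith [hγbound, hdpos, h1]
    -- the decrease of ‖g‖₁ after the push
    have hdrop : (∑ j, |g (x t) j|) - (∑ j, |g (x (t+1)) j|)
        = d it * (ℓd (x (t+1) it - (if it ∈ S then (1:ℝ) else 0))
            - ℓd (x t it - (if it ∈ S then (1:ℝ) else 0))) := by
      rw [hF t, hF (t+1), hsumg (x t), hsumg (x (t+1))]
      have hsingle : (∑ j, (d j * ℓd (x (t+1) j - (if j ∈ S then (1:ℝ) else 0))
              - d j * ℓd (x t j - (if j ∈ S then (1:ℝ) else 0))))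
          = d it * ℓd (x (t+1) it - (if it ∈ S then (1:ℝ) else 0))
            - d it * ℓd (x t it - (if it ∈ S then (1:ℝ) else 0)) := by
        rw [Finset.sum_eq_single it]
        · intro b _ hb
          rw [hx'j b hb]; ring
        · intro h; exact absurd (Finset.mem_univ it) h
      rw [Finset.sum_sub_distrib] at hsingle
      have hr : d it * (ℓd (x (t+1) it - (if it ∈ S then (1:ℝ) else 0))
            - ℓd (x t it - (if it ∈ S then (1:ℝ) else 0)))
          = d it * ℓd (x (t+1) it - (if it ∈ S then (1:ℝ) else 0))
            - d it * ℓd (x t it - (if it ∈ S then (1:ℝ) else 0)) := by ring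
      rw [hr]
      linarith [hsingle]
    -- condition 3(b) applied at the pushed node
    have hkey : k * ℓd (Δ t) ≤ ℓd (x (t+1) it - (if it ∈ S then (1:ℝ) else 0))
        - ℓd (x t it - (if it ∈ S then (1:ℝ) else 0)) := by
      by_cases hS : it ∈ S
      · rw [if_pos hS]
        have hb0 : 0 ≤ 1 - x (t+1) it := by linarith [(hx01 (t+1) it).2]
        have h := h3b (1 - x (t+1) it) (Δ t) hb0 hΔpos
        have hsum : (1 - x (t+1) it) + Δ t = 1 - x t it := by rw [hx'i]; ring
        rw [hsum] at h
        have e1 : ℓd (x (t+1) it - 1) = - ℓd (1 - x (t+1) it) := by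
          rw [show x (t+1) it - 1 = -(1 - x (t+1) it) by ring, hanti]
        have e2 : ℓd (x t it - 1) = - ℓd (1 - x t it) := by
          rw [show x t it - 1 = -(1 - x t it) by ring, hanti]
        rw [e1, e2]
        linarith [h]
      · rw [if_neg hS]
        have h := h3b (x t it) (Δ t) (hx01 t it).1 hΔpos
        rw [hx'i]
        have he : x t it + Δ t - 0 = x t it + Δ t := by ring
        have he2 : x t it - (0:ℝ) = x t it := by ring
        rw [he, he2]
        linarith [h]
    rw [hdrop]
    have h1 : k * ℓd θ < k * ℓd (Δ t) := (mul_lt_mul_iff_right₀ hk).mpr (hmono hΔθ)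
    calc k * d it * ℓd θ = d it * (k * ℓd θ) := by ring
      _ < d it * (k * ℓd (Δ t)) := (mul_lt_mul_iff_right₀ hdpos).mpr h1
      _ ≤ d it * (ℓd (x (t+1) it - (if it ∈ S then (1:ℝ) else 0))
            - ℓd (x t it - (if it ∈ S then (1:ℝ) else 0))) :=
          mul_le_mul_of_nonneg_left hkey (hdnn it)
  refine ⟨main, ?_⟩
  have hL : 0 < k * ℓd θ := mul_pos hk hℓθ
  have htel : ∀ t ∈ Finset.range K,
      k * d (i t) * ℓd θ ≤ (∑ j, |g (x t) j|) - ∑ j, |g (x (t+1)) j| :=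
    fun t ht => (main t (Finset.mem_range.mp ht)).le
  have hsum : (∑ t ∈ Finset.range K, k * d (i t) * ℓd θ)
      ≤ (∑ j, |g (x 0) j|) - ∑ j, |g (x K) j| := by
    have h := Finset.sum_le_sum htel
    rwa [Finset.sum_range_sub' (fun t => ∑ j, |g (x t) j|) K] at h
  have hFK : 0 ≤ ∑ j, |g (x K) j| := Finset.sum_nonneg fun j _ => abs_nonneg _
  rw [hinit] at hsum
  have htotal : (∑ t ∈ Finset.range K, d (i t)) * (k * ℓd θ) ≤ ∑ j ∈ S, d j := by
    have he : (∑ t ∈ Finset.range K, d (i t)) * (k * ℓd θ)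
        = ∑ t ∈ Finset.range K, k * d (i t) * ℓd θ := by
      rw [Finset.sum_mul]
      exact Finset.sum_congr rfl fun t _ => by ring
    rw [he]
    linarith [hsum, hFK]
  rw [le_div_iff₀ hL]
  exact htotal
end

section
/- When Algorithm nonlin-cut returns with accuracy parameter ρ and loss ℓ satisfying condition 3(a) with constants c, k, the complementary slackness defect satisfies kᵀx ≤ κ·k·ℓ'(1)·(1−ρ)·vol(S) / c, where k = [0, κd − g, 0]ᵀ is the vector of KKT multipliers. -/
/-!
Summing the residuals, the flow terms `w_ij ℓ'(x_i - x_j)` cancel because `w` is symmetric and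
`ℓ'` is odd, so `∑ g_i ≥ 0` says `∑ d_i ℓ'(x_i - 1_S(i)) ≤ 0`. Condition 3(a) with `Δ = 1` gives
`ℓ'(x_i) ≤ ℓ'(x_i - 1) + k ℓ'(1)` on `S`, hence `∑ d_i ℓ'(x_i) ≤ k ℓ'(1) vol(S)`, and `ℓ'' > c`
gives `c x ≤ ℓ'(x)` on `[0, 1]`. Finally each multiplier `κ d_i - g_i` is at most `(1 - ρ) κ d_i`.
-/

open Finset

theorem sum_sum_eq_zero_of_antisymm {ι R : Type*} [Fintype ι] [NonAssocRing R]
    [NoZeroDivisors R] [CharZero R] (a : ι → ι → R) (ha : ∀ i j, a j i = -a i j) :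
    ∑ i, ∑ j, a i j = 0 := by
  refine CharZero.eq_neg_self_iff.mp ?_
  calc ∑ i, ∑ j, a i j = ∑ i, ∑ j, a j i := sum_comm
    _ = ∑ i, ∑ j, -a i j := sum_congr rfl fun i _ => sum_congr rfl fun j _ => ha i j
    _ = -∑ i, ∑ j, a i j := by simp only [sum_neg_distrib]

theorem mul_le_of_lt_deriv {f : ℝ → ℝ} {c : ℝ} (hc : 0 ≤ c) (hf : Monotone f)
    (hf0 : f 0 = 0) (hderiv : ∀ t ∈ Set.Ioo (-1 : ℝ) 1, c < deriv f t)
    {y : ℝ} (hy : y ∈ Set.Icc (0 : ℝ) 1) : c * y ≤ f y := by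
  -- `deriv f t = 0` where `f` is not differentiable, so `c < deriv f t` forces differentiability.
  have hdiff : DifferentiableOn ℝ f (Set.Ioo (-1) 1) := fun t ht =>
    (differentiableAt_of_deriv_ne_zero (hc.trans_lt (hderiv t ht)).ne').differentiableWithinAt
  have hlt : ∀ t ∈ Set.Ico (0 : ℝ) 1, c * t ≤ f t := by
    rintro t ⟨ht0, ht1⟩
    rcases ht0.eq_or_lt with rfl | ht0
    · simp [hf0]
    have := (convex_Ioo (-1 : ℝ) 1).mul_sub_lt_image_sub_of_lt_deriv hdiff.continuousOn
      (by rwa [interior_Ioo]) (by rwa [interior_Ioo]) 0 (by norm_num) t ⟨by linarith, ht1⟩ ht0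
    simpa [hf0] using this.le
  rcases hy.2.lt_or_eq with hy1 | rfl
  · exact hlt y ⟨hy.1, hy1⟩
  · have hlim : Filter.Tendsto (fun t => c * t) (nhdsWithin 1 (Set.Iio 1)) (nhds (c * 1)) :=
      ((continuous_const_mul c).tendsto 1).mono_left nhdsWithin_le_nhds
    refine le_of_tendsto hlim ?_
    filter_upwards [Ioo_mem_nhdsLT (zero_lt_one' ℝ)] with t ht
    exact (hlt t ⟨ht.1.le, ht.2⟩).trans (hf ht.2.le)

section Residual

variable {V : Type*} [Fintype V] [DecidableEq V] (S : Finset V) (ℓ : ℝ → ℝ) (d x : V → ℝ)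

theorem sum_residual_eq {w : V → V → ℝ} (hsym : ∀ i j, w i j = w j i)
    (hodd : ∀ t, ℓ (-t) = -ℓ t) (γ : ℝ) :
    ∑ i, (-(1/γ) * ∑ j, w i j * ℓ (x i - x j) - d i * ℓ (x i - if i ∈ S then 1 else 0))
      = -∑ i, d i * ℓ (x i - if i ∈ S then 1 else 0) := by
  have hflow : ∑ i, ∑ j, w i j * ℓ (x i - x j) = 0 :=
    sum_sum_eq_zero_of_antisymm _ fun i j => by rw [hsym, ← mul_neg, ← hodd, neg_sub]
  rw [sum_sub_distrib, ← mul_sum, hflow, mul_zero, zero_sub]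

theorem sum_mul_loss_le {k : ℝ} (h3a : ∀ t Δ : ℝ, 0 < Δ → ℓ (t + Δ) ≤ ℓ t + k * ℓ Δ)
    (hd : ∀ i, 0 ≤ d i) :
    ∑ i, d i * ℓ (x i)
      ≤ ∑ i, d i * ℓ (x i - if i ∈ S then 1 else 0) + k * ℓ 1 * ∑ i ∈ S, d i := by
  calc ∑ i, d i * ℓ (x i)
      ≤ ∑ i, (d i * ℓ (x i - if i ∈ S then 1 else 0) + if i ∈ S then k * ℓ 1 * d i else 0) :=
        sum_le_sum fun i _ => by
          split_ifs
          · have := mul_le_mul_of_nonneg_left (h3a (x i - 1) 1 one_pos) (hd i)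
            rw [sub_add_cancel] at this
            linarith
          · simp
    _ = _ := by rw [sum_add_distrib, sum_ite_mem, univ_inter, mul_sum]

end Residual

theorem stmt_15_general {V : Type*} [Fintype V] [DecidableEq V]
    (w : V → V → ℝ) (hsym : ∀ i j, w i j = w j i) (hw : ∀ i j, 0 ≤ w i j)
    (d : V → ℝ) (hd : ∀ i, d i = ∑ j, w i j)
    (S : Finset V) (γ κ ρ c k : ℝ) (hκ : 0 < κ)
    (hρ1 : ρ < 1) (hc : 0 < c)
    (ℓd : ℝ → ℝ) (hmono : StrictMono ℓd)
    (hanti : ∀ t, ℓd (-t) = - ℓd t)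
    (hsecond : ∀ t ∈ Set.Ioo (-1 : ℝ) 1, c < deriv ℓd t)
    (h3a : ∀ t Δ : ℝ, 0 < Δ → ℓd (t + Δ) ≤ ℓd t + k * ℓd Δ)
    (x : V → ℝ) (g : V → ℝ)
    (hg : ∀ i, g i =
      -(1/γ) * ∑ j, w i j * ℓd (x i - x j)
      - d i * ℓd (x i - (if i ∈ S then (1:ℝ) else 0)))
    (hx01 : ∀ i, 0 ≤ x i ∧ x i ≤ 1)
    (hgnn : ∀ i, 0 ≤ g i)
    (hslack : ∀ i, κ * d i - g i ≤ (1 - ρ) * κ * d i) :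
    ∑ i, (κ * d i - g i) * x i
      ≤ κ * k * ℓd 1 * (1 - ρ) * (∑ i ∈ S, d i) / c := by
  have hℓ0 : ℓd 0 = 0 := CharZero.eq_neg_self_iff.mp (by simpa using hanti 0)
  have hd0 (i : V) : 0 ≤ d i := hd i ▸ sum_nonneg fun j _ => hw i j
  have hres : ∑ i, d i * ℓd (x i - if i ∈ S then 1 else 0) ≤ 0 := by
    have := sum_nonneg fun i (_ : i ∈ univ) => hgnn i
    rw [sum_congr rfl fun i _ => hg i, sum_residual_eq S ℓd d x hsym hanti γ] at this
    linarith
  have hvol : ∑ i, d i * x i ≤ k * ℓd 1 * (∑ i ∈ S, d i) / c := by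
    rw [le_div_iff₀ hc]
    calc (∑ i, d i * x i) * c = ∑ i, d i * (c * x i) := by
          rw [sum_mul]; exact sum_congr rfl fun i _ => by ring
      _ ≤ ∑ i, d i * ℓd (x i) := sum_le_sum fun i _ => mul_le_mul_of_nonneg_left
          (mul_le_of_lt_deriv hc.le hmono.monotone hℓ0 hsecond (hx01 i)) (hd0 i)
      _ ≤ k * ℓd 1 * ∑ i ∈ S, d i := by linarith [sum_mul_loss_le S ℓd d x h3a hd0]
  calc ∑ i, (κ * d i - g i) * x i ≤ ∑ i, (1 - ρ) * κ * (d i * x i) :=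
        sum_le_sum fun i _ => by
          rw [← mul_assoc]; exact mul_le_mul_of_nonneg_right (hslack i) (hx01 i).1
    _ ≤ (1 - ρ) * κ * (k * ℓd 1 * (∑ i ∈ S, d i) / c) := by
        rw [← mul_sum]
        gcongr
    _ = κ * k * ℓd 1 * (1 - ρ) * (∑ i ∈ S, d i) / c := by ring

/-- When nonlin-cut returns with accuracy parameter `ρ` and loss satisfying
condition 3(a) with constants `c, k`, the complementary slackness defect
satisfies `kᵀx = ∑_i (κ d_i − g_i) x_i ≤ κ k ℓ'(1)(1−ρ) vol(S)/c`. -/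
theorem stmt_15 {V : Type*} [Fintype V] [DecidableEq V]
    (w : V → V → ℝ) (hsym : ∀ i j, w i j = w j i) (hw : ∀ i j, 0 ≤ w i j)
    (d : V → ℝ) (hd : ∀ i, d i = ∑ j, w i j)
    (S : Finset V) (γ κ ρ c k : ℝ) (hγ : 0 < γ) (hκ : 0 < κ)
    (hρ0 : 0 < ρ) (hρ1 : ρ < 1) (hc : 0 < c) (hk : 0 < k)
    (ℓd : ℝ → ℝ) (hmono : StrictMono ℓd)
    (hanti : ∀ t, ℓd (-t) = - ℓd t)
    (hsecond : ∀ t ∈ Set.Ioo (-1 : ℝ) 1, c < deriv ℓd t)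
    (h3a : ∀ t Δ : ℝ, 0 < Δ → ℓd (t + Δ) ≤ ℓd t + k * ℓd Δ)
    (x : V → ℝ) (g : V → ℝ)
    (hg : ∀ i, g i =
      -(1/γ) * ∑ j, w i j * ℓd (x i - x j)
      - d i * ℓd (x i - (if i ∈ S then (1:ℝ) else 0)))
    (hx01 : ∀ i, 0 ≤ x i ∧ x i ≤ 1)
    (hgnn : ∀ i, 0 ≤ g i)
    (hterm : ∀ i, g i ≤ κ * d i)
    (hslack : ∀ i, κ * d i - g i ≤ (1 - ρ) * κ * d i) :
    ∑ i, (κ * d i - g i) * x i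
      ≤ κ * k * ℓd 1 * (1 - ρ) * (∑ i ∈ S, d i) / c :=
  stmt_15_general w hsym hw d hd S γ κ ρ c k hκ hρ1 hc ℓd hmono hanti hsecond h3a x g hg hx01 hgnn
    hslack
end

section
/- Under the leaking assumption ∑_{i∈∂T}(d_i − d̃_i)x_i^{q-1} ≤ 2φ(T)·vol(S), the solution x of the γ-localized q-norm cut problem (κ=0) satisfies ∑_{i∈T̄} d_i x_i^{q-1} < (2φ(T)/γ)·vol(S). -/
lemma sgn_le' (e : ℝ) (he : 0 < e) (a b : ℝ) (ha : 0 ≤ a) (hb : 0 ≤ b) :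
    |b - a| ^ e * Real.sign (b - a) ≤ b ^ e := by
  rcases lt_trichotomy a b with h | h | h
  · rw [Real.sign_of_pos (by linarith), abs_of_pos (by linarith), mul_one]
    exact Real.rpow_le_rpow (by linarith) (by linarith) he.le
  · rw [h, sub_self]; simpa using Real.rpow_nonneg hb e
  · rw [Real.sign_of_neg (by linarith)]
    have h1 : (0:ℝ) ≤ |b - a| ^ e := Real.rpow_nonneg (abs_nonneg _) _
    nlinarith [Real.rpow_nonneg hb e]

lemma sgn_lt' (e : ℝ) (he : 0 < e) (a b : ℝ) (ha : 0 < a) (hb : 0 ≤ b) :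
    |b - a| ^ e * Real.sign (b - a) < b ^ e := by
  rcases lt_trichotomy a b with h | h | h
  · rw [Real.sign_of_pos (by linarith), abs_of_pos (by linarith), mul_one]
    exact Real.rpow_lt_rpow (by linarith) (by linarith) he
  · have hb' : 0 < b := h ▸ ha
    rw [h, sub_self]; simpa using Real.rpow_pos_of_pos hb' e
  · rw [Real.sign_of_neg (by linarith)]
    have h1 : (0:ℝ) < |b - a| ^ e :=
      Real.rpow_pos_of_pos (by rw [abs_of_neg (by linarith)]; linarith) e
    nlinarith [Real.rpow_nonneg hb e]

lemma sgn_antisym' (e : ℝ) (a b : ℝ) :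
    |a - b| ^ e * Real.sign (a - b) = -(|b - a| ^ e * Real.sign (b - a)) := by
  rcases lt_trichotomy a b with h | h | h
  · rw [Real.sign_of_neg (by linarith), Real.sign_of_pos (by linarith), abs_sub_comm]; ring
  · rw [h]; simp
  · rw [Real.sign_of_pos (by linarith), Real.sign_of_neg (by linarith), abs_sub_comm]; ring

lemma sign_nonneg'' {s : ℝ} (h : 0 ≤ s) : 0 ≤ Real.sign s := by
  rcases eq_or_lt_of_le h with h' | h'
  · simp [← h']
  · rw [Real.sign_of_pos h']; norm_num

/-- Under the leaking assumption
`∑_{i∈T}(d_i − d̃_i) x_i^{q-1} ≤ 2 φ(T) vol(S)` (the summand vanishes off the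
boundary `∂T`), the solution `x` of the `γ`-localized q-norm cut problem with
`κ = 0` satisfies `∑_{i∉T} d_i x_i^{q-1} < (2 φ(T)/γ) vol(S)`.  Here
`ℓ'(t) = |t|^{q-1} sgn(t)`, `d̃_i = ∑_{j∈T} w(i,j)`, and the KKT identity
`0 = −(1/γ)∑_j w(i,j) ℓ'(x_i − x_j) − d_i x_i^{q-1}` holds for all `i ∉ T`. -/
theorem stmt_19 {V : Type*} [Fintype V] [DecidableEq V]
    (w : V → V → ℝ) (hsym : ∀ i j, w i j = w j i) (hw : ∀ i j, 0 ≤ w i j)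
    (d : V → ℝ) (hd : ∀ i, d i = ∑ j, w i j)
    (T : Finset V) (S : Finset V) (hST : S ⊆ T)
    (q γ φT volS : ℝ) (hq1 : 1 < q) (hq2 : q < 2) (hγ : 0 < γ)
    (hφ : 0 < φT) (hvolS : volS = ∑ i ∈ S, d i) (hvolSpos : 0 < volS)
    (x : V → ℝ) (hx : ∀ i, 0 ≤ x i)
    (dT : V → ℝ) (hdT : ∀ i, dT i = ∑ j ∈ T, w i j)
    (hleak : ∑ i ∈ T, (d i - dT i) * x i ^ (q - 1) ≤ 2 * φT * volS)
    (hkkt : ∀ i ∉ T,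
      (0 : ℝ) = -(1/γ) * (∑ j, w i j * (|x i - x j| ^ (q - 1) * Real.sign (x i - x j)))
        - d i * x i ^ (q - 1)) :
    ∑ i ∈ Tᶜ, d i * x i ^ (q - 1) < 2 * φT * volS / γ := by
  set e := q - 1 with he_def
  have he : 0 < e := by rw [he_def]; linarith
  have hγ' : γ ≠ 0 := ne_of_gt hγ
  set f : V → V → ℝ := fun i j => w i j * (|x i - x j| ^ e * Real.sign (x i - x j)) with hf
  have hdnn : ∀ i, 0 ≤ d i := fun i => by
    rw [hd i]; exact Finset.sum_nonneg fun j _ => hw i j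
  have hkkt' : ∀ i ∈ Tᶜ, γ * (d i * x i ^ e) = -∑ j, f i j := by
    intro i hi
    have h := hkkt i (Finset.mem_compl.mp hi)
    have h2 : d i * x i ^ e = -(1/γ) * (∑ j, f i j) := by rw [hf]; linarith
    rw [h2]; field_simp
  have hanti : ∀ i j, f j i = -f i j := by
    intro i j
    show w j i * (|x j - x i| ^ e * Real.sign (x j - x i))
      = -(w i j * (|x i - x j| ^ e * Real.sign (x i - x j)))
    rw [hsym j i, sgn_antisym' e (x j) (x i)]; ring
  -- Step 1: γ L = cross signed sum
  have key : γ * ∑ i ∈ Tᶜ, d i * x i ^ e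
      = ∑ i ∈ Tᶜ, ∑ j ∈ T, w i j * (|x j - x i| ^ e * Real.sign (x j - x i)) := by
    rw [Finset.mul_sum, Finset.sum_congr rfl hkkt']
    have cancel : ∑ i ∈ Tᶜ, ∑ j ∈ Tᶜ, f i j = 0 := by
      have h1 : ∑ i ∈ Tᶜ, ∑ j ∈ Tᶜ, f i j = ∑ j ∈ Tᶜ, ∑ i ∈ Tᶜ, f i j := Finset.sum_comm
      have h2 : ∑ j ∈ Tᶜ, ∑ i ∈ Tᶜ, f i j = -∑ j ∈ Tᶜ, ∑ i ∈ Tᶜ, f j i := by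
        rw [← Finset.sum_neg_distrib]
        exact Finset.sum_congr rfl fun j _ => by
          rw [← Finset.sum_neg_distrib]
          exact Finset.sum_congr rfl fun i _ => by rw [hanti j i]
      have h3 : ∑ j ∈ Tᶜ, ∑ i ∈ Tᶜ, f j i = ∑ i ∈ Tᶜ, ∑ j ∈ Tᶜ, f i j := rfl
      rw [h3] at h2; linarith [h1, h2]
    have split : ∀ i ∈ Tᶜ, -∑ j, f i j = ∑ j ∈ T, (-f i j) + (-∑ j ∈ Tᶜ, f i j) := by
      intro i _
      rw [← Finset.sum_add_sum_compl T (f i), Finset.sum_neg_distrib]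
      ring
    rw [Finset.sum_congr rfl split, Finset.sum_add_distrib]
    rw [Finset.sum_neg_distrib, cancel, neg_zero, add_zero]
    exact Finset.sum_congr rfl fun i _ => Finset.sum_congr rfl fun j _ => by
      rw [show -f i j = f j i from (hanti i j ▸ rfl), hf]
      show w j i * _ = _
      rw [hsym j i]
  -- Step 2: cross weight identity
  have cross_eq : ∑ i ∈ Tᶜ, ∑ j ∈ T, w i j * x j ^ e
      = ∑ j ∈ T, (d j - dT j) * x j ^ e := by
    rw [Finset.sum_comm]
    refine Finset.sum_congr rfl fun j hj => ?_
    rw [← Finset.sum_mul]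
    congr 1
    have h1 : ∑ i ∈ Tᶜ, w i j = ∑ i ∈ Tᶜ, w j i :=
      Finset.sum_congr rfl fun i _ => hsym i j
    have h2 := Finset.sum_add_sum_compl T (fun i => w j i)
    rw [h1, hd j, hdT j]
    simp only [hsym j] at h2 ⊢
    linarith
  have hLnn : 0 ≤ ∑ i ∈ Tᶜ, d i * x i ^ e :=
    Finset.sum_nonneg fun i _ => mul_nonneg (hdnn i) (Real.rpow_nonneg (hx i) e)
  rcases eq_or_lt_of_le hLnn with hL0 | hLpos
  · rw [← hL0]; positivity
  · -- find i0 with positive term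
    have ⟨i0, hi0Tc, hi0pos⟩ := Finset.exists_lt_of_sum_lt
      (by simpa using hLpos : ∑ i ∈ Tᶜ, (0:ℝ) < ∑ i ∈ Tᶜ, d i * x i ^ e)
    have hdi0 : 0 < d i0 := by
      rcases mul_pos_iff.mp hi0pos with ⟨h1, _⟩ | ⟨h1, _⟩
      · exact h1
      · linarith [hdnn i0]
    have hxi0 : 0 < x i0 := by
      rcases eq_or_lt_of_le (hx i0) with h' | h'
      · rw [← h', Real.zero_rpow he.ne'] at hi0pos; simp at hi0pos
      · exact h'
    set A : Finset V := Tᶜ.filter (fun i => 0 < d i) with hA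
    have hi0A : i0 ∈ A := Finset.mem_filter.mpr ⟨hi0Tc, hdi0⟩
    obtain ⟨iS, hiSA, hiSmax⟩ := Finset.exists_max_image A x ⟨i0, hi0A⟩
    obtain ⟨hiSTc, hdiS⟩ := Finset.mem_filter.mp hiSA
    have hxiS : 0 < x iS := lt_of_lt_of_le hxi0 (hiSmax i0 hi0A)
    -- at iS the signed sum is negative
    have hsumneg : ∑ j, f iS j < 0 := by
      have h := hkkt' iS hiSTc
      nlinarith [Real.rpow_pos_of_pos hxiS e, mul_pos hdiS (Real.rpow_pos_of_pos hxiS e)]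
    obtain ⟨jS, _, hjSneg⟩ := Finset.exists_lt_of_sum_lt
      (by simpa using hsumneg : ∑ j, f iS j < ∑ _j : V, (0:ℝ))
    have hwpos : 0 < w iS jS := by
      rcases eq_or_lt_of_le (hw iS jS) with h' | h'
      · exfalso; rw [hf] at hjSneg; simp only at hjSneg; rw [← h'] at hjSneg
        simp at hjSneg
      · exact h'
    have hxjS : x iS < x jS := by
      by_contra hcon
      push_neg at hcon
      have : 0 ≤ f iS jS := by
        rw [hf]
        exact mul_nonneg (hw iS jS) (mul_nonneg (Real.rpow_nonneg (abs_nonneg _) _)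
          (sign_nonneg'' (by linarith)))
      linarith
    have hjST : jS ∈ T := by
      by_contra hjT
      have hjA : jS ∈ A := Finset.mem_filter.mpr ⟨Finset.mem_compl.mpr hjT, by
        rw [hd jS]
        calc (0:ℝ) < w iS jS := hwpos
          _ = w jS iS := hsym iS jS
          _ ≤ ∑ k, w jS k := Finset.single_le_sum (fun k _ => hw jS k) (Finset.mem_univ iS)⟩
      exact absurd (hiSmax jS hjA) (not_le.mpr hxjS)
    -- strict inequality on cross sums
    have strict : ∑ i ∈ Tᶜ, ∑ j ∈ T, w i j * (|x j - x i| ^ e * Real.sign (x j - x i))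
        < ∑ i ∈ Tᶜ, ∑ j ∈ T, w i j * x j ^ e := by
      apply Finset.sum_lt_sum
      · intro i _
        exact Finset.sum_le_sum fun j _ =>
          mul_le_mul_of_nonneg_left (sgn_le' e he (x i) (x j) (hx i) (hx j)) (hw i j)
      · refine ⟨iS, hiSTc, Finset.sum_lt_sum (fun j _ =>
          mul_le_mul_of_nonneg_left (sgn_le' e he (x iS) (x j) (hx iS) (hx j)) (hw iS j))
          ⟨jS, hjST, mul_lt_mul_of_pos_left (sgn_lt' e he (x iS) (x jS) hxiS (hx jS)) hwpos⟩⟩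
    have final : γ * ∑ i ∈ Tᶜ, d i * x i ^ e < 2 * φT * volS := by
      rw [key]
      calc _ < ∑ i ∈ Tᶜ, ∑ j ∈ T, w i j * x j ^ e := strict
        _ = ∑ j ∈ T, (d j - dT j) * x j ^ e := cross_eq
        _ ≤ 2 * φT * volS := hleak
    rw [lt_div_iff₀ hγ]
    linarith
end
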